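/- Let X be a metrizable Tychonoff space. Then the free topological vector space V(X) has countable tightness if and only if X is separable. -/

import Mathlib

open Topology Set

universe u v w

/-- `IsFreeTVS V i` says that the (real) topological vector space `V` together with the
continuous map `i : X → V` is the free topological vector space over `X`: every continuous
map from `X` to a topological vector space `E` extends uniquely to a continuous linear
operator `V →L[ℝ] E`. -/
def IsFreeTVS {X : Type u} [TopologicalSpace X] (V : Type v) [AddCommGroup V] [Module ℝ V]
    [TopologicalSpace V] [IsTopologicalAddGroup V] [ContinuousSMul ℝ V] (i : X → V) : Prop :=
  Continuous i ∧
    ∀ (E : Type w) [AddCommGroup E] [Module ℝ E] [TopologicalSpace E]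
      [IsTopologicalAddGroup E] [ContinuousSMul ℝ E] (f : X → E),
      Continuous f → ∃! g : V →L[ℝ] E, ∀ x, g (i x) = f x

/-- `SPn i n` is the set `SP_n(X) = {λ₁x₁ + ⋯ + λₙxₙ : λᵢ ∈ [−n,n], xᵢ ∈ X}` inside `V`. -/
def SPn {X : Type u} {V : Type v} [AddCommGroup V] [Module ℝ V]
    (i : X → V) (n : ℕ) : Set V :=
  {v | ∃ (c : Fin n → ℝ) (x : Fin n → X),
    (∀ j, c j ∈ Set.Icc (-(n : ℝ)) (n : ℝ)) ∧ v = ∑ j, c j • i (x j)}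

/-- A topological space `Y` has countable tightness if whenever `y` is in the closure of a
set `A`, there is a countable subset `B ⊆ A` with `y` in the closure of `B`. -/
def CountableTightness (Y : Type w') [TopologicalSpace Y] : Prop :=
  ∀ (A : Set Y) (y : Y), y ∈ closure A →
    ∃ B : Set Y, B ⊆ A ∧ B.Countable ∧ y ∈ closure B

/-
If `X` is separable it is second countable, and `V(X)` is the union of the continuous images of
the second countable spaces `ℝⁿ × Xⁿ` under `(c, x) ↦ ∑ cⱼ • xⱼ`; so `V(X)` has a countable
network, hence countable tightness.

Conversely, a non-separable metric space contains an `ε`-separated copy `d : ω₁ → X` of `ω₁`. Let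
`e(·, b)` be an injection of `[0, b]` into `ℕ` for each `b < ω₁`, and let `A` consist of the
vectors `(e(a, b) + 1)⁻¹ • (d a + d b)`. Given a neighbourhood `U` of `0`, take `W` with
`W + W ⊆ U`; uncountably many `a` share an `m` with `t • d a ∈ W` whenever `|t| ≤ 1/(m + 1)`, and
`e` is unbounded on every infinite set, so `A` meets `U` and `0 ∈ closure A`. A countable `B ⊆ A`
involves only countably many indices, on which `e(a, b) ≤ f a + f b` for some `f : ω₁ → ℕ`. Since
the points `d a` are closed and discrete, `d a ↦ f a + 1` extends to a continuous function on `X`,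
and then to a continuous functional on `V(X)` which is `≥ 1` on `B`; so `0 ∉ closure B`.
-/

def IsNetwork {Y : Type*} [TopologicalSpace Y] (𝒩 : Set (Set Y)) : Prop :=
  ∀ y (U : Set Y), IsOpen U → y ∈ U → ∃ N ∈ 𝒩, y ∈ N ∧ N ⊆ U

theorem IsNetwork.countableTightness {Y : Type*} [TopologicalSpace Y] {𝒩 : Set (Set Y)}
    (hnet : IsNetwork 𝒩) (h𝒩 : 𝒩.Countable) : CountableTightness Y := by
  intro A y hy
  have : Nonempty Y := ⟨y⟩
  choose! pick hpick using fun N (hN : (N ∩ A).Nonempty) => hN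
  refine ⟨pick '' {N ∈ 𝒩 | (N ∩ A).Nonempty}, ?_, (h𝒩.mono (sep_subset _ _)).image _, ?_⟩
  · rintro _ ⟨N, hN, rfl⟩
    exact (hpick N hN.2).2
  · refine mem_closure_iff.2 fun U hU hyU => ?_
    obtain ⟨a, haU, haA⟩ := mem_closure_iff.1 hy U hU hyU
    obtain ⟨N, hN, haN, hNU⟩ := hnet a U hU haU
    exact ⟨pick N, hNU (hpick N ⟨a, haN, haA⟩).1, N, ⟨hN, a, haN, haA⟩, rfl⟩

theorem exists_countable_isNetwork_of_iUnion_range {Y : Type*} [TopologicalSpace Y]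
    {Z : ℕ → Type*} [∀ n, TopologicalSpace (Z n)] [∀ n, SecondCountableTopology (Z n)]
    {φ : ∀ n, Z n → Y} (hφ : ∀ n, Continuous (φ n)) (hcover : ⋃ n, range (φ n) = univ) :
    ∃ 𝒩 : Set (Set Y), IsNetwork 𝒩 ∧ 𝒩.Countable := by
  refine ⟨⋃ n, image (φ n) '' TopologicalSpace.countableBasis (Z n), fun y U hU hyU => ?_,
    countable_iUnion fun n => (TopologicalSpace.countable_countableBasis _).image _⟩
  obtain ⟨n, z, rfl⟩ := mem_iUnion.1 (hcover.symm ▸ mem_univ y)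
  obtain ⟨s, hs, hzs, hsU⟩ :=
    (TopologicalSpace.isBasis_countableBasis (Z n)).exists_subset_of_mem_open
      (mem_preimage.2 hyU) (hU.preimage (hφ n))
  exact ⟨φ n '' s, mem_iUnion.2 ⟨n, mem_image_of_mem _ hs⟩, mem_image_of_mem _ hzs,
    image_subset_iff.2 hsU⟩

theorem Set.Countable.exists_le_add {α : Type*} {C : Set α} (hC : C.Countable)
    (e : α → α → ℕ) : ∃ f : α → ℕ, ∀ a ∈ C, ∀ b ∈ C, e a b ≤ f a + f b := by
  obtain ⟨κ, hκ⟩ := Set.countable_iff_exists_injOn.1 hC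
  -- `f b` only has to dominate the finitely many values at `c ∈ C` with `κ c ≤ κ b`
  have hbound : ∀ b, ∃ N, ∀ c ∈ C, κ c ≤ κ b → e c b ≤ N ∧ e b c ≤ N := by
    intro b
    have hfin : {c ∈ C | κ c ≤ κ b}.Finite :=
      ((finite_Iic (κ b)).subset (image_subset_iff.2 fun c hc => hc.2)).of_finite_image
        (hκ.mono fun c hc => hc.1)
    obtain ⟨N, hN⟩ := ((hfin.image fun c => e c b).union (hfin.image fun c => e b c)).bddAbove
    exact ⟨N, fun c hc hcb =>
      ⟨hN (Or.inl ⟨c, ⟨hc, hcb⟩, rfl⟩), hN (Or.inr ⟨c, ⟨hc, hcb⟩, rfl⟩)⟩⟩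
  choose f hf using hbound
  refine ⟨f, fun a ha b hb => ?_⟩
  rcases le_total (κ a) (κ b) with hab | hba
  · exact (hf b a ha hab).1.trans (Nat.le_add_left _ _)
  · exact (hf a b hb hba).2.trans (Nat.le_add_right _ _)

theorem Set.Infinite.exists_le_of_injOn_Iic {α : Type*} [LinearOrder α] {e : α → α → ℕ}
    (he : ∀ b, InjOn (e · b) (Iic b)) {S : Set α} (hS : S.Infinite) (m : ℕ) :
    ∃ a ∈ S, ∃ b ∈ S, m ≤ e a b := by
  obtain ⟨T, hTS, hT⟩ := hS.exists_subset_card_eq (m + 1)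
  have hTne : T.Nonempty := Finset.card_pos.1 (by omega)
  by_contra! hlt
  have hb := T.max'_mem hTne
  have hcard : T.card ≤ (Finset.range m).card :=
    Finset.card_le_card_of_injOn (e · (T.max' hTne))
      (fun a ha => Finset.mem_range.2 (hlt a (hTS ha) _ (hTS hb)))
      ((he _).mono fun a ha => T.le_max' a ha)
  simp [hT] at hcard

section OmegaOne

open Cardinal Ordinal

instance : Uncountable (ω₁ : Ordinal.{u}).ToType := by
  rw [← aleph0_lt_mk_iff, mk_toType, card_omega]
  exact aleph0_lt_aleph_one

theorem nonempty_omega_one_toType_embedding {β : Type u} [Uncountable β] :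
    Nonempty ((ω₁ : Ordinal.{u}).ToType ↪ β) := by
  rw [← Cardinal.le_def, mk_toType, card_omega, ← succ_aleph0]
  exact Order.succ_le_of_lt (aleph0_lt_mk_iff.2 ‹_›)

theorem exists_injOn_Iic_omega_one :
    ∃ e : (ω₁ : Ordinal.{u}).ToType → (ω₁ : Ordinal.{u}).ToType → ℕ,
      ∀ b, InjOn (e · b) (Iic b) := by
  have hIic : ∀ b : (ω₁ : Ordinal.{u}).ToType, (Iic b).Countable := by
    intro b
    rw [← Iio_insert, countable_insert, ← le_aleph0_iff_set_countable, ← Order.lt_succ_iff,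
      succ_aleph0]
    simpa using mk_Iio_lt b (by simp)
  choose e he using fun b => Set.countable_iff_exists_injOn.1 (hIic b)
  exact ⟨fun a b => e b a, he⟩

end OmegaOne

theorem exists_maximal_pairwise {α : Type*} (r : α → α → Prop) :
    ∃ s : Set α, Maximal (fun s => s.Pairwise r) s :=
  zorn_subset _ fun _ hcS hc => ⟨_, hc.pairwise_sUnion.2 hcS, fun _ => subset_sUnion_of_mem⟩

theorem exists_uncountable_pairwise_le_dist {X : Type*} [PseudoMetricSpace X]
    (hX : ¬ TopologicalSpace.SeparableSpace X) :
    ∃ ε > 0, ∃ s : Set X, ¬ s.Countable ∧ s.Pairwise (ε ≤ dist · ·) := by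
  by_contra! hsep
  apply hX
  suffices SecondCountableTopology X from inferInstance
  refine Metric.secondCountable_of_almost_dense_set fun ε hε => ?_
  -- a maximal `ε`-separated set is `ε`-dense
  obtain ⟨s, hs⟩ := exists_maximal_pairwise (ε ≤ dist · · : X → X → Prop)
  refine ⟨s, of_not_not fun hs' => hsep ε hε s hs' hs.prop, fun x => ?_⟩
  by_contra! hfar
  have hins : (insert x s).Pairwise (ε ≤ dist · ·) :=
    pairwise_insert.2 ⟨hs.prop, fun y hy _ => ⟨(hfar y hy).le, dist_comm x y ▸ (hfar y hy).le⟩⟩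
  have hx : x ∈ s := hs.mem_of_prop_insert hins
  exact (hfar x hx).not_ge (by simpa using hε.le)

theorem exists_continuous_extension_of_pairwise_le_dist {ι X : Type*} [MetricSpace X] {ε : ℝ}
    (hε : 0 < ε) {d : ι → X} (hd : Pairwise fun a b => ε ≤ dist (d a) (d b)) (t : ι → ℝ) :
    ∃ F : C(X, ℝ), ∀ j, F (d j) = t j := by
  let : TopologicalSpace ι := ⊥
  have : DiscreteTopology ι := ⟨rfl⟩
  obtain ⟨F, hF⟩ := ContinuousMap.exists_extension
    (Metric.isClosedEmbedding_of_pairwise_le_dist hε hd) ⟨t, continuous_of_discreteTopology⟩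
  exact ⟨F, fun j => DFunLike.congr_fun hF j⟩

noncomputable def pairSum {α V : Type*} [AddCommGroup V] [Module ℝ V] (e : α → α → ℕ)
    (v : α → V) (p : α × α) : V :=
  (1 / ((e p.1 p.2 : ℝ) + 1)) • (v p.1 + v p.2)

section TVS

variable {V : Type v} [AddCommGroup V] [Module ℝ V] [TopologicalSpace V]
  [IsTopologicalAddGroup V] [ContinuousSMul ℝ V]

theorem zero_mem_closure_range_pairSum {α : Type*} [LinearOrder α] [Uncountable α]
    {e : α → α → ℕ} (he : ∀ b, InjOn (e · b) (Iic b)) (v : α → V) :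
    (0 : V) ∈ closure (range (pairSum e v)) := by
  refine mem_closure_iff_nhds.2 fun U hU => ?_
  obtain ⟨W, hW, hWU⟩ := exists_nhds_zero_half hU
  have hsmall : ∀ a, ∃ N : ℕ, ∀ k ≥ N, (1 / ((k : ℝ) + 1)) • v a ∈ W := fun a => by
    have hlim := (tendsto_one_div_add_atTop_nhds_zero_nat (𝕜 := ℝ)).smul_const (v a)
    rw [zero_smul] at hlim
    exact Filter.eventually_atTop.1 (hlim.eventually_mem hW)
  choose N hN using hsmall
  obtain ⟨m, hm⟩ : ∃ m, (N ⁻¹' {m}).Infinite := by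
    by_contra! hfin
    have : (⋃ m, N ⁻¹' {m}).Countable := countable_iUnion fun m => (hfin m).countable
    exact not_countable_univ
      (by simpa only [← preimage_iUnion, iUnion_of_singleton, preimage_univ] using this)
  obtain ⟨a, ha, b, hb, hab⟩ := hm.exists_le_of_injOn_Iic he m
  refine ⟨pairSum e v (a, b), ?_, (a, b), rfl⟩
  rw [pairSum, smul_add]
  exact hWU _ (hN a _ (ha.symm ▸ hab)) _ (hN b _ (hb.symm ▸ hab))

namespace IsFreeTVS

theorem exists_clm_extension {X : Type u} [TopologicalSpace X] {i : X → V}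
    (hV : IsFreeTVS.{u, v, w} V i) {F : X → ℝ} (hF : Continuous F) :
    ∃ g : V →L[ℝ] ℝ, ∀ x, g (i x) = F x := by
  obtain ⟨g, hg, -⟩ := hV.2 (ULift.{w} ℝ) (ULift.up ∘ F) (continuous_uliftUp.comp hF)
  exact ⟨ContinuousLinearEquiv.ulift.toContinuousLinearMap.comp g,
    fun x => congrArg ULift.down (hg x)⟩

theorem span_range_eq_top {X : Type u} [TopologicalSpace X] {i : X → V}
    (hV : IsFreeTVS.{u, v, w} V i) : Submodule.span ℝ (range i) = ⊤ := by
  by_contra hne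
  obtain ⟨ψ, hψ, hker⟩ := Submodule.exists_le_ker_of_lt_top _ (lt_top_iff_ne_top.2 hne)
  -- every linear map into an indiscrete space is continuous, so uniqueness of extensions
  -- forces a functional vanishing on `range i` to vanish
  let _ : TopologicalSpace (ULift.{w} ℝ) := ⊤
  have : IsTopologicalAddGroup (ULift.{w} ℝ) :=
    { continuous_add := continuous_top, continuous_neg := continuous_top }
  have : ContinuousSMul ℝ (ULift.{w} ℝ) := ⟨continuous_top⟩
  obtain ⟨g, -, hg⟩ := hV.2 (ULift.{w} ℝ) (fun _ => 0) continuous_const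
  let g' : V →L[ℝ] ULift.{w} ℝ := ⟨ULift.moduleEquiv.symm.toLinearMap ∘ₗ ψ, continuous_top⟩
  have hψi : ∀ x, ψ (i x) = 0 := fun x => hker (Submodule.subset_span ⟨x, rfl⟩)
  have : g' = 0 := (hg g' fun x => congrArg ULift.up (hψi x)).trans (hg 0 fun _ => rfl).symm
  exact hψ (LinearMap.ext fun v => congrArg ULift.down (DFunLike.congr_fun this v))

theorem countableTightness {X : Type u} [TopologicalSpace X] [SecondCountableTopology X]
    {i : X → V} (hV : IsFreeTVS.{u, v, w} V i) : CountableTightness V := by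
  let φ : ∀ n : ℕ, (Fin n → ℝ) × (Fin n → X) → V := fun n p => ∑ j, p.1 j • i (p.2 j)
  have hφ : ∀ n, Continuous (φ n) := fun n => continuous_finsetSum _ fun j _ =>
    ((continuous_apply j).comp continuous_fst).smul
      (hV.1.comp ((continuous_apply j).comp continuous_snd))
  have hcover : ⋃ n, range (φ n) = univ := by
    refine eq_univ_of_forall fun v => ?_
    obtain ⟨n, c, x, hv⟩ :=
      Submodule.mem_span_set'.1 (hV.span_range_eq_top ▸ Submodule.mem_top (x := v))
    choose y hy using fun j => (x j).2
    exact mem_iUnion.2 ⟨n, (c, y), by simp only [φ, hy, hv]⟩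
  obtain ⟨𝒩, hnet, h𝒩⟩ := exists_countable_isNetwork_of_iUnion_range hφ hcover
  exact hnet.countableTightness h𝒩

theorem zero_notMem_closure_image_pairSum {X : Type u} [MetricSpace X] {i : X → V}
    (hV : IsFreeTVS.{u, v, w} V i) {α : Type*} {ε : ℝ} (hε : 0 < ε) {d : α → X}
    (hd : Pairwise fun a b => ε ≤ dist (d a) (d b)) (e : α → α → ℕ) {P : Set (α × α)}
    (hP : P.Countable) : (0 : V) ∉ closure (pairSum e (i ∘ d) '' P) := by
  obtain ⟨f, hf⟩ := ((hP.image Prod.fst).union (hP.image Prod.snd)).exists_le_add e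
  obtain ⟨F, hF⟩ := exists_continuous_extension_of_pairwise_le_dist hε hd fun a => (f a : ℝ) + 1
  obtain ⟨g, hg⟩ := hV.exists_clm_extension F.continuous
  have hgP : ∀ q ∈ P, 1 ≤ g (pairSum e (i ∘ d) q) := by
    intro q hq
    have hle : (e q.1 q.2 : ℝ) + 1 ≤ (f q.1 + 1) + (f q.2 + 1) := by
      have : (e q.1 q.2 : ℝ) ≤ f q.1 + f q.2 := by
        exact_mod_cast hf _ (Or.inl (mem_image_of_mem _ hq)) _ (Or.inr (mem_image_of_mem _ hq))
      linarith
    simp only [pairSum, map_smul, map_add, Function.comp_apply, hg, hF, smul_eq_mul]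
    rwa [one_div, ← div_eq_inv_mul, one_le_div (by positivity)]
  have hsub : pairSum e (i ∘ d) '' P ⊆ {v | 1 ≤ g v} := image_subset_iff.2 hgP
  intro h0
  have h1 : (1 : ℝ) ≤ g 0 := closure_minimal hsub (isClosed_le continuous_const g.continuous) h0
  norm_num at h1

theorem separableSpace_of_countableTightness {X : Type u} [MetricSpace X] {i : X → V}
    (hV : IsFreeTVS.{u, v, w} V i) (hct : CountableTightness V) :
    TopologicalSpace.SeparableSpace X := by
  by_contra hX
  obtain ⟨ε, hε, S, hS, hSsep⟩ := exists_uncountable_pairwise_le_dist hX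
  have : Uncountable S := not_countable_iff.1 (by rwa [countable_coe_iff])
  obtain ⟨emb⟩ := nonempty_omega_one_toType_embedding (β := S)
  let d := fun a => (emb a : X)
  have hd : Pairwise fun a b => ε ≤ dist (d a) (d b) := fun a b hab =>
    hSsep (emb a).2 (emb b).2 (Subtype.coe_injective.ne (emb.injective.ne hab))
  obtain ⟨e, he⟩ := exists_injOn_Iic_omega_one.{u}
  obtain ⟨B, hBA, hBc, hB0⟩ := hct _ 0 (zero_mem_closure_range_pairSum he (i ∘ d))
  choose! p hp using fun b (hb : b ∈ B) => hBA hb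
  refine hV.zero_notMem_closure_image_pairSum hε hd e (hBc.image p) (closure_mono ?_ hB0)
  exact fun b hb => ⟨p b, mem_image_of_mem p hb, hp b hb⟩

end IsFreeTVS

end TVS

/-- If `X` is a metrizable (Tychonoff) space with free topological vector
space `(V, i)`, then `V` has countable tightness if and only if `X` is separable. -/
theorem countableTightness_freeTVS_iff_separable
    {X : Type u} [TopologicalSpace X] [TopologicalSpace.MetrizableSpace X]
    (V : Type v) [AddCommGroup V] [Module ℝ V] [TopologicalSpace V]
    [IsTopologicalAddGroup V] [ContinuousSMul ℝ V] (i : X → V)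
    (hV : IsFreeTVS V i) :
    CountableTightness V ↔ TopologicalSpace.SeparableSpace X := by
  let := TopologicalSpace.metrizableSpaceMetric X
  exact ⟨hV.separableSpace_of_countableTightness, fun _ => hV.countableTightness⟩
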